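/- The two sides of the 3→3 relation are independent of the admissible choice of 2-face weight: if w and w′ are both homogeneous of degree 1 in G with d_{123}w = d_{123}w′ = 1, then ∫ W_{12345} W_{12346} W_{12356} w da_{1234} db_{1234} da_{1235} db_{1235} da_{1236} db_{1236} = ∫ W_{12345} W_{12346} W_{12356} w′ da_{1234} db_{1234} da_{1235} db_{1235} da_{1236} db_{1236}; and if v and v′ are both homogeneous of degree 1 with d_{456}v = d_{456}v′ = 1, then ∫ W_{12456} W_{13456} W_{23456} v da_{1456} db_{1456} da_{2456} db_{2456} da_{3456} db_{3456} = ∫ W_{12456} W_{13456} W_{23456} v′ da_{1456} db_{1456} da_{2456} db_{2456} da_{3456} db_{3456}. -/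

import Mathlib

/-!
Common setup: the Grassmann algebra `G` over `ℂ` with anticommuting generators
`a_{ijkl}`, `b_{ijkl}`, one pair for each 4-element subset `{i,j,k,l} ⊆ {1,…,6}`
(`i<j<k<l`), realized as the exterior algebra of the free `ℂ`-module on the generators;
left derivatives `∂/∂x` (left contraction with the dual functional of the generator `x`),
Berezin integrals `∫ · dx` (right contraction with the dual functional, which is the
`ℂ`-linear operator determined by `∫1 dx = 0`, `∫x dx = 1`, `∫ g·h dx = g·∫h dx`
whenever `g` does not involve `x`), the 4-simplex weights `W_{ijklm}` and the 2-face
operators `d_{ijk}` of Korepanov's paper on Pachner moves 3→3 and 2↔4.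
-/

noncomputable section

/-- Index type for the Grassmann generators: a Boolean tag (`true` for the `a` variables,
`false` for the `b` variables) together with a 4-element subset of `{1,…,6}`. -/
def GIdx : Type := Bool × {T : Finset ℕ // T ⊆ Finset.Icc 1 6 ∧ T.card = 4}

instance : DecidableEq GIdx := by unfold GIdx; infer_instance

/-- The underlying free `ℂ`-module on the generators. -/
abbrev GV : Type := GIdx → ℂ

/-- `G`, the Grassmann algebra over `ℂ` on the anticommuting generators `a_{ijkl}`, `b_{ijkl}`. -/
abbrev GA : Type := ExteriorAlgebra ℂ GV

/-- The Grassmann generator tagged `c` attached to the subset `T` (junk value `0` for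
invalid `T`; all generators actually used are valid). -/
def gen (c : Bool) (T : Finset ℕ) : GA :=
  if h : T ⊆ Finset.Icc 1 6 ∧ T.card = 4 then
    ExteriorAlgebra.ι ℂ (Pi.single (⟨c, T, h⟩ : GIdx) (1 : ℂ))
  else 0

/-- The generator `a_{ijkl}`. -/
def ga (i j k l : ℕ) : GA := gen true {i, j, k, l}

/-- The generator `b_{ijkl}`. -/
def gb (i j k l : ℕ) : GA := gen false {i, j, k, l}

/-- The dual functional picking out the coordinate of a generator. -/
def dual (c : Bool) (T : Finset ℕ) : Module.Dual ℂ GV :=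
  if h : T ⊆ Finset.Icc 1 6 ∧ T.card = 4 then LinearMap.proj (⟨c, T, h⟩ : GIdx) else 0

/-- The left derivative `∂/∂a_{ijkl}`: the `ℂ`-linear operator sending a monomial containing
`a_{ijkl}` to the monomial obtained by moving `a_{ijkl}` to the left end via the anticommutation
relations and deleting it, and sending monomials not containing it to `0`.  This is exactly
left contraction (interior product) with the dual functional of the generator. -/
def pdA (i j k l : ℕ) : GA →ₗ[ℂ] GA := CliffordAlgebra.contractLeft (dual true {i, j, k, l})

/-- The left derivative `∂/∂b_{ijkl}`. -/
def pdB (i j k l : ℕ) : GA →ₗ[ℂ] GA := CliffordAlgebra.contractLeft (dual false {i, j, k, l})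

/-- The Berezin integral `∫ · da_{ijkl}`: the `ℂ`-linear operator on `G` with
`∫ 1 da = 0`, `∫ a da = 1` and `∫ g·h da = g·(∫ h da)` whenever `g` does not involve `a`.
This is exactly right contraction with the dual functional of the generator. -/
def binA (i j k l : ℕ) : GA →ₗ[ℂ] GA :=
  CliffordAlgebra.contractRight.flip (dual true {i, j, k, l})

/-- The Berezin integral `∫ · db_{ijkl}`. -/
def binB (i j k l : ℕ) : GA →ₗ[ℂ] GA :=
  CliffordAlgebra.contractRight.flip (dual false {i, j, k, l})

/-- The iterated Berezin integral `∫ · da_{ijkl} db_{ijkl}` (first in `a_{ijkl}`, then in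
`b_{ijkl}`). -/
def binAB (i j k l : ℕ) : GA →ₗ[ℂ] GA := binB i j k l ∘ₗ binA i j k l

/-- `homog n w` says that `w` is homogeneous of degree `n` in the Grassmann algebra `G`,
i.e. lies in the `n`-th graded piece (the `n`-th power of the submodule of degree-1
elements). -/
def homog (n : ℕ) (w : GA) : Prop :=
  w ∈ (LinearMap.range (ExteriorAlgebra.ι ℂ : GV →ₗ[ℂ] GA)) ^ n

/-- `ζ_{ij} = ζ_i - ζ_j`. -/
def zz (ζ : ℕ → ℂ) (i j : ℕ) : ℂ := ζ i - ζ j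

/-- The 4-simplex weight `W_{ijklm}` (for `i<j<k<l<m`):
`W_{ijklm} = (1/ζ_{lm})·(ζ_{kl}a_{ijkl} − ζ_{km}a_{ijkm} + ζ_{lm}a_{ijlm} − ζ_{lm}a_{iklm})`
`·(ζ_{kl}b_{ijkl} − ζ_{km}b_{ijkm} + ζ_{lm}b_{ijlm} + ζ_{lm}a_{jklm})`
`·(−ζ_{il}a_{ijkl} − ζ_{jl}b_{ijkl} + ζ_{im}a_{ijkm} + ζ_{jm}b_{ijkm} − ζ_{lm}b_{iklm} + ζ_{lm}b_{jklm})`. -/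
def Wt (ζ : ℕ → ℂ) (i j k l m : ℕ) : GA :=
  (zz ζ l m)⁻¹ •
    ((zz ζ k l • ga i j k l - zz ζ k m • ga i j k m + zz ζ l m • ga i j l m
        - zz ζ l m • ga i k l m) *
      (zz ζ k l • gb i j k l - zz ζ k m • gb i j k m + zz ζ l m • gb i j l m
        + zz ζ l m • ga j k l m) *
      (-(zz ζ i l • ga i j k l) - zz ζ j l • gb i j k l + zz ζ i m • ga i j k m
        + zz ζ j m • gb i j k m - zz ζ l m • gb i k l m + zz ζ l m • gb j k l m))

/-- The operator `d_{123}` attached to the 2-face `123`: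
`d_{123} = (ζ_{23}/ζ_{34})∂/∂a_{1234} + (ζ_{31}/ζ_{34})∂/∂b_{1234} + (ζ_{23}/ζ_{35})∂/∂a_{1235}`
`+ (ζ_{31}/ζ_{35})∂/∂b_{1235} + (ζ_{23}/ζ_{36})∂/∂a_{1236} + (ζ_{31}/ζ_{36})∂/∂b_{1236}`. -/
def d123 (ζ : ℕ → ℂ) : GA →ₗ[ℂ] GA :=
  (zz ζ 2 3 / zz ζ 3 4) • pdA 1 2 3 4 + (zz ζ 3 1 / zz ζ 3 4) • pdB 1 2 3 4
    + (zz ζ 2 3 / zz ζ 3 5) • pdA 1 2 3 5 + (zz ζ 3 1 / zz ζ 3 5) • pdB 1 2 3 5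
    + (zz ζ 2 3 / zz ζ 3 6) • pdA 1 2 3 6 + (zz ζ 3 1 / zz ζ 3 6) • pdB 1 2 3 6

/-- The operator `d_{456}` attached to the 2-face `456`:
`d_{456} = −∂/∂b_{1456} − ∂/∂b_{2456} − ∂/∂b_{3456}`. -/
def d456 : GA →ₗ[ℂ] GA := -pdB 1 4 5 6 - pdB 2 4 5 6 - pdB 3 4 5 6

/-- The operator `d_{156}` attached to the 2-face `156`:
`d_{156} = ∂/∂a_{1256} + ∂/∂a_{1356} + ∂/∂a_{1456}`. -/
def d156 : GA →ₗ[ℂ] GA := pdA 1 2 5 6 + pdA 1 3 5 6 + pdA 1 4 5 6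

/-- The operator `d_{256}` attached to the 2-face `256`:
`d_{256} = −∂/∂b_{1256} + ∂/∂a_{2356} + ∂/∂a_{2456}`. -/
def d256 : GA →ₗ[ℂ] GA := -pdB 1 2 5 6 + pdA 2 3 5 6 + pdA 2 4 5 6

/-- The operator `d_{356}` attached to the 2-face `356`:
`d_{356} = −∂/∂b_{1356} − ∂/∂b_{2356} + ∂/∂a_{3456}`. -/
def d356 : GA →ₗ[ℂ] GA := -pdB 1 3 5 6 - pdB 2 3 5 6 + pdA 3 4 5 6

/-- The integral on the left-hand side of the `3→3` relation, with 2-face weight `w`: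
`∫ W₁₂₃₄₅ W₁₂₃₄₆ W₁₂₃₅₆ w da₁₂₃₄ db₁₂₃₄ da₁₂₃₅ db₁₂₃₅ da₁₂₃₆ db₁₂₃₆`
(iterated Berezin integral, innermost first). -/
def int33L (ζ : ℕ → ℂ) (w : GA) : GA :=
  binAB 1 2 3 6 (binAB 1 2 3 5 (binAB 1 2 3 4
    (Wt ζ 1 2 3 4 5 * Wt ζ 1 2 3 4 6 * Wt ζ 1 2 3 5 6 * w)))

/-- The integral on the right-hand side of the `3→3` relation, with 2-face weight `w`:
`∫ W₁₂₄₅₆ W₁₃₄₅₆ W₂₃₄₅₆ w da₁₄₅₆ db₁₄₅₆ da₂₄₅₆ db₂₄₅₆ da₃₄₅₆ db₃₄₅₆`. -/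
def int33R (ζ : ℕ → ℂ) (w : GA) : GA :=
  binAB 3 4 5 6 (binAB 2 4 5 6 (binAB 1 4 5 6
    (Wt ζ 1 2 4 5 6 * Wt ζ 1 3 4 5 6 * Wt ζ 2 3 4 5 6 * w)))

/-- The left-hand side of the `3→3` relation:
`(1/(ζ₃₄ζ₃₅ζ₃₆)) · ∫ W₁₂₃₄₅ W₁₂₃₄₆ W₁₂₃₅₆ w da₁₂₃₄ db₁₂₃₄ da₁₂₃₅ db₁₂₃₅ da₁₂₃₆ db₁₂₃₆`. -/
def lhs33 (ζ : ℕ → ℂ) (w : GA) : GA :=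
  (zz ζ 3 4 * zz ζ 3 5 * zz ζ 3 6)⁻¹ • int33L ζ w

/-- The right-hand side of the `3→3` relation:
`(1/ζ₅₆³) · ∫ W₁₂₄₅₆ W₁₃₄₅₆ W₂₃₄₅₆ w da₁₄₅₆ db₁₄₅₆ da₂₄₅₆ db₂₄₅₆ da₃₄₅₆ db₃₄₅₆`. -/
def rhs33 (ζ : ℕ → ℂ) (w : GA) : GA :=
  (zz ζ 5 6 ^ 3)⁻¹ • int33R ζ w

/-- The left-hand side of the `2→4` relation:
`(1/ζ₃₄) · ∫ W₁₂₃₄₅ W₁₂₃₄₆ da₁₂₃₄ db₁₂₃₄`. -/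
def lhs24 (ζ : ℕ → ℂ) : GA :=
  (zz ζ 3 4)⁻¹ • binAB 1 2 3 4 (Wt ζ 1 2 3 4 5 * Wt ζ 1 2 3 4 6)

/-- The integral on the right-hand side of the `2→4` relation, with 2-face weight `w`:
`∫ W₁₂₃₅₆ W₁₂₄₅₆ W₁₃₄₅₆ W₂₃₄₅₆ w da₁₂₅₆ db₁₂₅₆ da₁₃₅₆ db₁₃₅₆ da₁₄₅₆ db₁₄₅₆ da₂₃₅₆ db₂₃₅₆ da₂₄₅₆ db₂₄₅₆ da₃₄₅₆ db₃₄₅₆`. -/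
def int24R (ζ : ℕ → ℂ) (w : GA) : GA :=
  binAB 3 4 5 6 (binAB 2 4 5 6 (binAB 2 3 5 6 (binAB 1 4 5 6 (binAB 1 3 5 6 (binAB 1 2 5 6
    (Wt ζ 1 2 3 5 6 * Wt ζ 1 2 4 5 6 * Wt ζ 1 3 4 5 6 * Wt ζ 2 3 4 5 6 * w))))))

/-- The right-hand side of the `2→4` relation:
`−ζ₅₆ · (1/ζ₅₆⁶) · ∫ W₁₂₃₅₆ W₁₂₄₅₆ W₁₃₄₅₆ W₂₃₄₅₆ w da₁₂₅₆ db₁₂₅₆ ⋯ da₃₄₅₆ db₃₄₅₆`. -/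
def rhs24 (ζ : ℕ → ℂ) (w : GA) : GA :=
  (-zz ζ 5 6) • ((zz ζ 5 6 ^ 6)⁻¹ • int24R ζ w)


/-!
Write `d = contractLeft φ` and the Berezin integral as iterated right contraction with the dual
functionals `ψ₁, …, ψ₆` of the integration variables. A degree-one weight is `ι u` with
`φ u = 1`, so two admissible weights differ by `ι u` with `u ∈ ker φ`. Every degree-one factor
of the three simplex weights lies in `ker φ` as well, and right contraction with `φ` kills
products of such factors, so the difference `X` of the two integrands satisfies `X ⌊ φ = 0`.
Finally `φ` is a combination of the `ψᵢ` with a nonzero coefficient on one of them; since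
contractions anticommute and square to zero, the iterated contraction is linear in that slot,
vanishes there on the other `ψᵢ` and on `φ`, hence vanishes on `X`.
-/

namespace CliffordAlgebra

variable {R M : Type*} [CommRing R] [AddCommGroup M] [Module R M] {Q : QuadraticForm R M}

theorem contractRight_mul_eq_zero_of_mem_adjoin {φ : Module.Dual R M} {x y : CliffordAlgebra Q}
    (hx : contractRight x φ = 0) (hy : y ∈ Algebra.adjoin R (ι Q '' LinearMap.ker φ)) :
    contractRight (x * y) φ = 0 := by
  induction hy using Algebra.adjoin_induction generalizing x with
  | mem y hy =>
    obtain ⟨v, hv, rfl⟩ := hy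
    rw [contractRight_mul_ι, LinearMap.mem_ker.mp hv, hx, zero_smul, zero_mul, sub_zero]
  | algebraMap r => rw [contractRight_mul_algebraMap, hx, zero_mul]
  | add y z _ _ hy hz => rw [mul_add, map_add, LinearMap.add_apply, hy hx, hz hx, add_zero]
  | mul y z _ _ hy hz => rw [← mul_assoc, hz (hy hx)]

theorem contractRight_eq_zero_of_mem_adjoin {φ : Module.Dual R M} {y : CliffordAlgebra Q}
    (hy : y ∈ Algebra.adjoin R (ι Q '' LinearMap.ker φ)) : contractRight y φ = 0 := by
  simpa using contractRight_mul_eq_zero_of_mem_adjoin (contractRight_one Q φ) hy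

/-- `iteratedContractRight [ψ₁, …, ψₙ] x = x ⌊ ψ₁ ⌊ ⋯ ⌊ ψₙ`. -/
def iteratedContractRight :
    List (Module.Dual R M) → CliffordAlgebra Q →ₗ[R] CliffordAlgebra Q
  | [] => LinearMap.id
  | ψ :: L => iteratedContractRight L ∘ₗ contractRight.flip ψ

@[simp]
theorem iteratedContractRight_nil (x : CliffordAlgebra Q) : iteratedContractRight [] x = x := rfl

@[simp]
theorem iteratedContractRight_cons (ψ : Module.Dual R M) (L : List (Module.Dual R M))
    (x : CliffordAlgebra Q) :
    iteratedContractRight (ψ :: L) x = iteratedContractRight L (contractRight x ψ) := rfl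

theorem iteratedContractRight_append (L₁ L₂ : List (Module.Dual R M)) (x : CliffordAlgebra Q) :
    iteratedContractRight (L₁ ++ L₂) x =
      iteratedContractRight L₂ (iteratedContractRight L₁ x) := by
  induction L₁ generalizing x with
  | nil => rfl
  | cons ψ L₁ ih => exact ih _

theorem contractRight_iteratedContractRight (L : List (Module.Dual R M)) (φ : Module.Dual R M)
    (x : CliffordAlgebra Q) :
    contractRight (iteratedContractRight L x) φ =
      (-1 : R) ^ L.length • iteratedContractRight L (contractRight x φ) := by
  induction L generalizing x with
  | nil => simp
  | cons ψ L ih =>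
    rw [iteratedContractRight_cons, ih, iteratedContractRight_cons, contractRight_comm,
      map_neg, List.length_cons, pow_succ, mul_neg_one, neg_smul, smul_neg]

theorem iteratedContractRight_contractRight_of_mem {L : List (Module.Dual R M)}
    {ψ : Module.Dual R M} (h : ψ ∈ L) (x : CliffordAlgebra Q) :
    iteratedContractRight L (contractRight x ψ) = 0 := by
  induction L generalizing x with
  | nil => simp at h
  | cons θ L ih =>
    rw [iteratedContractRight_cons]
    rcases List.mem_cons.mp h with rfl | h
    · rw [contractRight_contractRight, map_zero]
    · rw [contractRight_comm, map_neg, ih h, neg_zero]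

theorem contractRight_iteratedContractRight_of_mem {L : List (Module.Dual R M)}
    {ψ : Module.Dual R M} (h : ψ ∈ L) (x : CliffordAlgebra Q) :
    contractRight (iteratedContractRight L x) ψ = 0 := by
  rw [contractRight_iteratedContractRight, iteratedContractRight_contractRight_of_mem h,
    smul_zero]

theorem iteratedContractRight_eq_zero {L₁ L₂ : List (Module.Dual R M)} {ψ φ : Module.Dual R M}
    {c : R} (hc : IsUnit c) (hφ : φ - c • ψ ∈ Submodule.span R {θ | θ ∈ L₁ ++ L₂})
    {x : CliffordAlgebra Q} (hx : contractRight x φ = 0) :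
    iteratedContractRight (L₁ ++ ψ :: L₂) x = 0 := by
  set T := iteratedContractRight L₂ ∘ₗ contractRight (iteratedContractRight L₁ x)
  have hspan : Submodule.span R {θ | θ ∈ L₁ ++ L₂} ≤ LinearMap.ker T := by
    refine Submodule.span_le.mpr fun θ hθ => ?_
    rcases List.mem_append.mp hθ with h | h
    · simp [T, contractRight_iteratedContractRight_of_mem h]
    · exact iteratedContractRight_contractRight_of_mem h _
  have hTφ : T φ = 0 := by
    simp [T, contractRight_iteratedContractRight, hx]
  have hTψ : c • T ψ = 0 := by
    have := hspan hφ
    rwa [LinearMap.mem_ker, map_sub, hTφ, map_smul, zero_sub, neg_eq_zero] at this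
  rw [iteratedContractRight_append, iteratedContractRight_cons]
  exact (hc.smul_left_cancel.mp (hTψ.trans (smul_zero c).symm))

theorem iteratedContractRight_mul_ι_eq {L₁ L₂ : List (Module.Dual R M)}
    {ψ φ : Module.Dual R M}
    {c : R} (hc : IsUnit c) (hφ : φ - c • ψ ∈ Submodule.span R {θ | θ ∈ L₁ ++ L₂})
    {P : CliffordAlgebra Q} (hP : P ∈ Algebra.adjoin R (ι Q '' LinearMap.ker φ))
    {u u' : M} (hu : φ u = φ u') :
    iteratedContractRight (L₁ ++ ψ :: L₂) (P * ι Q u) =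
      iteratedContractRight (L₁ ++ ψ :: L₂) (P * ι Q u') := by
  rw [← sub_eq_zero, ← map_sub, ← mul_sub, ← map_sub]
  refine iteratedContractRight_eq_zero hc hφ (contractRight_eq_zero_of_mem_adjoin ?_)
  exact Subalgebra.mul_mem _ hP (Algebra.subset_adjoin ⟨u - u', by simp [hu], rfl⟩)

end CliffordAlgebra

open CliffordAlgebra

section SimplexWeights

variable (ζ : ℕ → ℂ)

theorem zz_ne_zero (hζ : Set.InjOn ζ (Set.Icc 1 6)) {i j : ℕ} (hi : i ∈ Set.Icc 1 6)
    (hj : j ∈ Set.Icc 1 6) (hij : i ≠ j) : zz ζ i j ≠ 0 :=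
  fun h => hij (hζ hi hj (sub_eq_zero.mp h))

/-- Junk value `0` for invalid `T`, as in `gen`. -/
def eV (c : Bool) (T : Finset ℕ) : GV :=
  if h : T ⊆ Finset.Icc 1 6 ∧ T.card = 4 then Pi.single (⟨c, T, h⟩ : GIdx) (1 : ℂ) else 0

theorem gen_eq_ι (c : Bool) (T : Finset ℕ) : gen c T = ExteriorAlgebra.ι ℂ (eV c T) := by
  unfold gen eV
  split_ifs <;> simp

theorem dual_eV (c c' : Bool) (T T' : Finset ℕ) :
    dual c T (eV c' T') =
      if (T ⊆ Finset.Icc 1 6 ∧ T.card = 4) ∧ c = c' ∧ T = T' then 1 else 0 := by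
  by_cases hT : T ⊆ Finset.Icc 1 6 ∧ T.card = 4
  · by_cases hT' : T' ⊆ Finset.Icc 1 6 ∧ T'.card = 4
    · rw [show dual c T = LinearMap.proj (⟨c, T, hT⟩ : GIdx) from dif_pos hT, eV,
        dif_pos hT']
      refine (Pi.single_apply (i := (⟨c', T', hT'⟩ : GIdx)) _ (⟨c, T, hT⟩ : GIdx)).trans ?_
      exact if_congr (by simp [Prod.ext_iff, hT]) rfl rfl
    · rw [eV, dif_neg hT', map_zero, if_neg]
      rintro ⟨-, -, rfl⟩
      exact hT' hT
  · simp [dual, hT]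

def vA (i j k l m : ℕ) : GV :=
  zz ζ k l • eV true {i, j, k, l} - zz ζ k m • eV true {i, j, k, m}
    + zz ζ l m • eV true {i, j, l, m} - zz ζ l m • eV true {i, k, l, m}

def vB (i j k l m : ℕ) : GV :=
  zz ζ k l • eV false {i, j, k, l} - zz ζ k m • eV false {i, j, k, m}
    + zz ζ l m • eV false {i, j, l, m} + zz ζ l m • eV true {j, k, l, m}

def vC (i j k l m : ℕ) : GV :=
  -(zz ζ i l • eV true {i, j, k, l}) - zz ζ j l • eV false {i, j, k, l}
    + zz ζ i m • eV true {i, j, k, m} + zz ζ j m • eV false {i, j, k, m}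
    - zz ζ l m • eV false {i, k, l, m} + zz ζ l m • eV false {j, k, l, m}

theorem Wt_eq (i j k l m : ℕ) :
    Wt ζ i j k l m = (zz ζ l m)⁻¹ •
      (ExteriorAlgebra.ι ℂ (vA ζ i j k l m) * ExteriorAlgebra.ι ℂ (vB ζ i j k l m) *
        ExteriorAlgebra.ι ℂ (vC ζ i j k l m)) := by
  simp only [Wt, vA, vB, vC, ga, gb, gen_eq_ι, map_add, map_sub, map_smul, map_neg]

theorem Wt_mem_adjoin {φ : Module.Dual ℂ GV} {i j k l m : ℕ} (hA : φ (vA ζ i j k l m) = 0)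
    (hB : φ (vB ζ i j k l m) = 0) (hC : φ (vC ζ i j k l m) = 0) :
    Wt ζ i j k l m ∈ Algebra.adjoin ℂ (ExteriorAlgebra.ι ℂ '' LinearMap.ker φ) := by
  have mem {v : GV} (hv : φ v = 0) :
      ExteriorAlgebra.ι ℂ v ∈ Algebra.adjoin ℂ (ExteriorAlgebra.ι ℂ '' LinearMap.ker φ) :=
    Algebra.subset_adjoin ⟨v, hv, rfl⟩
  rw [Wt_eq]
  exact Subalgebra.smul_mem _ (mul_mem (mul_mem (mem hA) (mem hB)) (mem hC)) _

def phi123 : Module.Dual ℂ GV :=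
  (zz ζ 2 3 / zz ζ 3 4) • dual true {1, 2, 3, 4}
    + (zz ζ 3 1 / zz ζ 3 4) • dual false {1, 2, 3, 4}
    + (zz ζ 2 3 / zz ζ 3 5) • dual true {1, 2, 3, 5}
    + (zz ζ 3 1 / zz ζ 3 5) • dual false {1, 2, 3, 5}
    + (zz ζ 2 3 / zz ζ 3 6) • dual true {1, 2, 3, 6}
    + (zz ζ 3 1 / zz ζ 3 6) • dual false {1, 2, 3, 6}

def phi456 : Module.Dual ℂ GV :=
  -dual false {1, 4, 5, 6} - dual false {2, 4, 5, 6} - dual false {3, 4, 5, 6}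

theorem d123_eq : d123 ζ = contractLeft (phi123 ζ) := by
  simp only [d123, phi123, pdA, pdB, map_add, map_smul]

theorem d456_eq : d456 = contractLeft phi456 := by
  simp only [d456, phi456, pdB, map_neg, map_sub]

theorem int33L_eq (w : GA) :
    int33L ζ w = iteratedContractRight
      [dual true {1, 2, 3, 4}, dual false {1, 2, 3, 4}, dual true {1, 2, 3, 5},
        dual false {1, 2, 3, 5}, dual true {1, 2, 3, 6}, dual false {1, 2, 3, 6}]
      (Wt ζ 1 2 3 4 5 * Wt ζ 1 2 3 4 6 * Wt ζ 1 2 3 5 6 * w) := by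
  simp [int33L, binAB, binA, binB]

theorem int33R_eq (w : GA) :
    int33R ζ w = iteratedContractRight
      [dual true {1, 4, 5, 6}, dual false {1, 4, 5, 6}, dual true {2, 4, 5, 6},
        dual false {2, 4, 5, 6}, dual true {3, 4, 5, 6}, dual false {3, 4, 5, 6}]
      (Wt ζ 1 2 4 5 6 * Wt ζ 1 3 4 5 6 * Wt ζ 2 3 4 5 6 * w) := by
  simp [int33R, binAB, binA, binB]

theorem phi123_sub_mem_span :
    phi123 ζ - (zz ζ 2 3 / zz ζ 3 4) • dual true {1, 2, 3, 4} ∈ Submodule.span ℂ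
      {θ | θ ∈ [dual false {1, 2, 3, 4}, dual true {1, 2, 3, 5}, dual false {1, 2, 3, 5},
        dual true {1, 2, 3, 6}, dual false {1, 2, 3, 6}]} := by
  simp only [phi123, add_assoc, add_sub_cancel_left]
  refine add_mem ?_ (add_mem ?_ (add_mem ?_ (add_mem ?_ ?_))) <;>
    exact Submodule.smul_mem _ _ (Submodule.subset_span (by simp))

theorem phi456_sub_mem_span :
    phi456 - (-1 : ℂ) • dual false {1, 4, 5, 6} ∈ Submodule.span ℂ
      {θ | θ ∈ [dual true {1, 4, 5, 6}, dual true {2, 4, 5, 6}, dual false {2, 4, 5, 6},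
        dual true {3, 4, 5, 6}, dual false {3, 4, 5, 6}]} := by
  rw [show phi456 - (-1 : ℂ) • dual false {1, 4, 5, 6} =
      -dual false {2, 4, 5, 6} - dual false {3, 4, 5, 6} by simp only [phi456]; module]
  exact sub_mem (neg_mem (Submodule.subset_span (by simp))) (Submodule.subset_span (by simp))

theorem Wt_mul_Wt_mul_Wt_mem_adjoin_ker_phi123 (hζ : Set.InjOn ζ (Set.Icc 1 6)) :
    Wt ζ 1 2 3 4 5 * Wt ζ 1 2 3 4 6 * Wt ζ 1 2 3 5 6 ∈
      Algebra.adjoin ℂ (ExteriorAlgebra.ι ℂ '' LinearMap.ker (phi123 ζ)) := by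
  have := zz_ne_zero ζ hζ (i := 3) (j := 4) (by simp) (by simp) (by simp)
  have := zz_ne_zero ζ hζ (i := 3) (j := 5) (by simp) (by simp) (by simp)
  have := zz_ne_zero ζ hζ (i := 3) (j := 6) (by simp) (by simp) (by simp)
  refine mul_mem (mul_mem ?_ ?_) ?_ <;> apply Wt_mem_adjoin <;>
    simp +decide [phi123, vA, vB, vC, dual_eV]
  -- the `vC` goals reduce to `ζ₂₃ ζ₁ₖ + ζ₃₁ ζ₂ₖ = ζ₂₁ ζ₃ₖ`
  all_goals field_simp; simp only [zz]; ring

theorem Wt_mul_Wt_mul_Wt_mem_adjoin_ker_phi456 :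
    Wt ζ 1 2 4 5 6 * Wt ζ 1 3 4 5 6 * Wt ζ 2 3 4 5 6 ∈
      Algebra.adjoin ℂ (ExteriorAlgebra.ι ℂ '' LinearMap.ker phi456) := by
  refine mul_mem (mul_mem ?_ ?_) ?_ <;> apply Wt_mem_adjoin <;>
    simp +decide [phi456, vA, vB, vC, dual_eV]

end SimplexWeights

theorem exists_eq_ι_of_homog_one {w : GA} (hw : homog 1 w) :
    ∃ u, w = ExteriorAlgebra.ι ℂ u := by
  rw [homog, pow_one] at hw
  obtain ⟨u, rfl⟩ := LinearMap.mem_range.mp hw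
  exact ⟨u, rfl⟩

theorem iteratedContractRight_mul_eq_of_contractLeft_eq_one {L₁ L₂ : List (Module.Dual ℂ GV)}
    {ψ φ : Module.Dual ℂ GV} {c : ℂ} (hc : c ≠ 0)
    (hφ : φ - c • ψ ∈ Submodule.span ℂ {θ | θ ∈ L₁ ++ L₂}) {P : GA}
    (hP : P ∈ Algebra.adjoin ℂ (ExteriorAlgebra.ι ℂ '' LinearMap.ker φ)) {w w' : GA}
    (hw : homog 1 w) (hw' : homog 1 w') (hd : contractLeft φ w = 1)
    (hd' : contractLeft φ w' = 1) :
    iteratedContractRight (L₁ ++ ψ :: L₂) (P * w) =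
      iteratedContractRight (L₁ ++ ψ :: L₂) (P * w') := by
  obtain ⟨u, rfl⟩ := exists_eq_ι_of_homog_one hw
  obtain ⟨u', rfl⟩ := exists_eq_ι_of_homog_one hw'
  refine iteratedContractRight_mul_ι_eq hc.isUnit hφ hP ?_
  rw [contractLeft_ι] at hd hd'
  exact (ExteriorAlgebra.algebraMap_inj GV _ _).mp (hd.trans hd'.symm)

/-- The two sides of the 3→3 relation do not depend on the admissible choice of the
2-face weight. -/
theorem face_weight_independence_three_three (ζ : ℕ → ℂ)
    (hζ : Set.InjOn ζ (Set.Icc 1 6)) :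
    (∀ w w' : GA, homog 1 w → homog 1 w' → d123 ζ w = 1 → d123 ζ w' = 1 →
      int33L ζ w = int33L ζ w') ∧
    (∀ v v' : GA, homog 1 v → homog 1 v' → d456 v = 1 → d456 v' = 1 →
      int33R ζ v = int33R ζ v') := by
  constructor
  · intro w w' hw hw' hd hd'
    rw [d123_eq] at hd hd'
    rw [int33L_eq, int33L_eq]
    exact iteratedContractRight_mul_eq_of_contractLeft_eq_one (L₁ := [])
      (div_ne_zero (zz_ne_zero ζ hζ (by simp) (by simp) (by simp))
        (zz_ne_zero ζ hζ (by simp) (by simp) (by simp)))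
      (phi123_sub_mem_span ζ) (Wt_mul_Wt_mul_Wt_mem_adjoin_ker_phi123 ζ hζ) hw hw' hd hd'
  · intro v v' hv hv' hd hd'
    rw [d456_eq] at hd hd'
    rw [int33R_eq, int33R_eq]
    exact iteratedContractRight_mul_eq_of_contractLeft_eq_one (L₁ := [dual true {1, 4, 5, 6}])
      (neg_ne_zero.mpr one_ne_zero) phi456_sub_mem_span
      (Wt_mul_Wt_mul_Wt_mem_adjoin_ker_phi456 ζ) hv hv' hd hd'
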